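/- arXiv:2412.20494 — 3 statements merged into one kernel-verified Lean document; each statement's English description precedes it below -/
import Mathlib

section
/- Let A be an abelian category. A pro-object belonging to Pro_ω(A) is strict if and only if it is isomorphic in Pro(A) to plim of a diagram of epimorphisms in A indexed by the opposite of a countable directed poset. (In other words, if an object of Pro_ω(A) can be represented by some, possibly uncountable, directed diagram of epimorphisms in A, then it can also be represented by a countable directed diagram of epimorphisms.) -/
open CategoryTheory CategoryTheory.Limits Opposite

universe v u u'

namespace ProPaper

/-- A bundled nonempty directed poset with carrier in `Type v`. -/
structure DirPoset : Type (v + 1) where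
  carrier : Type v
  [str : PartialOrder carrier]
  nonempty : Nonempty carrier
  directed : IsDirected carrier (· ≤ ·)

attribute [instance] DirPoset.str

instance : CoeSort DirPoset.{v} (Type v) :=
  ⟨DirPoset.carrier⟩

variable (C : Type u) [Category.{v} C]

/-- The `Γ`-indexed diagram of corepresentable functors `Hom_C(D γ, -)`
associated to a diagram `D : Γᵒᵖ ⥤ C`. -/
def corepDiagram {Γ : Type v} [Preorder Γ] (D : Γᵒᵖ ⥤ C) : Γ ⥤ C ⥤ Type v :=
  D.rightOp ⋙ coyoneda

/-- A functor `C ⥤ Type v` is a pro-object functor if it is isomorphic to the colimit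
of the directed diagram of corepresentable functors associated to some diagram
`D : Γᵒᵖ ⥤ C` indexed by a (nonempty) directed poset `Γ`. -/
def IsProFunctor (F : C ⥤ Type v) : Prop :=
  ∃ (Γ : DirPoset.{v}) (D : Γ.carrierᵒᵖ ⥤ C),
    Nonempty (F ≅ colimit (corepDiagram C D))

/-- The category of pro-objects of `C`: the opposite of the full subcategory of
`C ⥤ Type v` spanned by the directed colimits of corepresentable functors. -/
abbrev Pro : Type max u (v + 1) :=
  (ObjectProperty.FullSubcategory (IsProFunctor C))ᵒᵖ

variable {C}

/-- The pro-object `plim_{γ ∈ Γ} D γ` associated to a diagram `D : Γᵒᵖ ⥤ C`. -/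
noncomputable def plimObj {Γ : DirPoset.{v}} (D : Γ.carrierᵒᵖ ⥤ C) : Pro C :=
  op ⟨colimit (corepDiagram C D), Γ, D, ⟨Iso.refl _⟩⟩

variable (C) in
/-- The functor `plim : (Γᵒᵖ ⥤ C) ⥤ Pro C`. -/
noncomputable def plim (Γ : DirPoset.{v}) : (Γ.carrierᵒᵖ ⥤ C) ⥤ Pro C :=
  (ObjectProperty.lift (IsProFunctor C)
    ((Functor.leftOpRightOpEquiv Γ.carrier C).functor ⋙
      (Functor.whiskeringRight Γ.carrier Cᵒᵖ (C ⥤ Type v)).obj coyoneda ⋙ colim)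
    (fun D => ⟨Γ, D.unop, ⟨Iso.refl _⟩⟩)).rightOp

@[simp]
lemma plim_obj {Γ : DirPoset.{v}} (D : Γ.carrierᵒᵖ ⥤ C) :
    (plim C Γ).obj D = plimObj D := rfl

/-- A pro-object belongs to `Pro_ω(C)` if it can be represented by a diagram indexed by
a countable directed poset. -/
def InProOmega (X : Pro C) : Prop :=
  ∃ (Γ : DirPoset.{v}), Countable Γ.carrier ∧
    ∃ (D : Γ.carrierᵒᵖ ⥤ C), Nonempty (X ≅ plimObj D)

variable (C) in
/-- The category `Pro_ω(C)`, as a full subcategory of `Pro C`. -/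
abbrev ProOmega : Type max u (v + 1) :=
  ObjectProperty.FullSubcategory (InProOmega (C := C))

/-- A pro-object is strict if it can be represented by a directed diagram all of whose
transition morphisms are epimorphisms. -/
def IsStrict (X : Pro C) : Prop :=
  ∃ (Γ : DirPoset.{v}) (D : Γ.carrierᵒᵖ ⥤ C),
    (∀ {i j : Γ.carrierᵒᵖ} (f : i ⟶ j), Epi (D.map f)) ∧ Nonempty (X ≅ plimObj D)

variable (C) in
/-- The category `SPro(C)` of strict pro-objects, as a full subcategory of `Pro C`. -/
abbrev SPro : Type max u (v + 1) :=
  ObjectProperty.FullSubcategory (IsStrict (C := C))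

variable (C) in
/-- The inclusion functor `SPro(C) ⥤ Pro(C)`. -/
def SProInclusion : SPro C ⥤ Pro C :=
  ObjectProperty.ι _

variable (C) in
/-- The category `SPro_ω(C)` of countably indexed strict pro-objects, as a full
subcategory of `Pro_ω(C)`. -/
abbrev SProOmega : Type max u (v + 1) :=
  ObjectProperty.FullSubcategory (fun X : ProOmega C => IsStrict X.obj)

variable (C) in
/-- The inclusion functor `SPro_ω(C) ⥤ Pro_ω(C)`. -/
def SProOmegaInclusion : SProOmega C ⥤ ProOmega C :=
  ObjectProperty.ι _

/-- The one-point directed poset. -/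
def unitPoset : DirPoset.{v} where
  carrier := PUnit
  nonempty := ⟨PUnit.unit⟩
  directed := ⟨fun a b => ⟨b, le_of_eq (Subsingleton.elim a b), le_refl b⟩⟩

variable (C) in
/-- The canonical fully faithful embedding `C ⥤ Pro C` (via constant diagrams). -/
noncomputable def constPro : C ⥤ Pro C :=
  Functor.const unitPoset.carrierᵒᵖ ⋙ plim C unitPoset

/-- `plimObj` for a countably indexed diagram, as an object of `Pro_ω(C)`. -/
noncomputable def plimOmegaObj {Γ : DirPoset.{v}} (hΓ : Countable Γ.carrier)
    (D : Γ.carrierᵒᵖ ⥤ C) : ProOmega C :=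
  ⟨plimObj D, Γ, hΓ, D, ⟨Iso.refl _⟩⟩

variable (C) in
/-- The functor `plim` into `Pro_ω(C)`, for a countable directed poset. -/
noncomputable def plimOmega (Γ : DirPoset.{v}) (hΓ : Countable Γ.carrier) :
    (Γ.carrierᵒᵖ ⥤ C) ⥤ ProOmega C :=
  ObjectProperty.lift _ (plim C Γ) (fun D => ⟨Γ, hΓ, D, ⟨Iso.refl _⟩⟩)

variable (C) in
/-- The canonical fully faithful embedding `C ⥤ Pro_ω C` (via constant diagrams). -/
noncomputable def constProOmega : C ⥤ ProOmega C :=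
  ObjectProperty.lift _ (constPro C)
    (fun X => ⟨unitPoset, inferInstanceAs (Countable PUnit),
      (Functor.const unitPoset.carrierᵒᵖ).obj X, ⟨Iso.refl _⟩⟩)

/-! An isomorphism `plim D' ≅ plim D` with `D'` countably indexed sends the countably many
classes of identities `[𝟙 (D' γ')]` to classes represented at indices `g γ'` of `Γ`, and every
element of `colim Hom(D -, ·)` is a pushforward of one of these. So over any countable directed
`Γ₀ ⊇ range g`, every element of the colimit is still represented; and since the transitions of
`D` are epimorphisms, the maps `Hom(D γ, Y) → colim` are injective, so restricting to `Γ₀`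
identifies nothing new. Hence `plim D ≅ plim (D|Γ₀)`, a countable diagram of epimorphisms. -/

lemma _root_.Set.Countable.exists_superset_directedOn {α : Type*} [LE α] [IsDirectedOrder α]
    {S : Set α} (hS : S.Countable) : ∃ T, S ⊆ T ∧ T.Countable ∧ DirectedOn (· ≤ ·) T := by
  choose ub le_ub_left le_ub_right using directed_of (α := α) (· ≤ ·)
  let T : ℕ → Set α := fun n => Nat.rec S (fun _ Tn => Tn ∪ Set.image2 ub Tn Tn) n
  have hT : Monotone T := monotone_nat_of_le_succ fun _ => Set.subset_union_left
  refine ⟨⋃ n, T n, Set.subset_iUnion T 0, Set.countable_iUnion fun n => ?_, ?_⟩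
  · induction n with
    | zero => exact hS
    | succ n ih => exact ih.union (ih.image2 ih _)
  · simp only [DirectedOn, Set.mem_iUnion]
    rintro a ⟨m, ha⟩ b ⟨n, hb⟩
    exact ⟨ub a b, ⟨max m n + 1, Or.inr (Set.mem_image2_of_mem
      (hT (le_max_left m n) ha) (hT (le_max_right m n) hb))⟩, le_ub_left a b, le_ub_right a b⟩

section Corepresentable

variable {C : Type u} [Category.{v} C] {Q : Type v} [Preorder Q]

lemma corepDiagram_jointly_surjective (D : Qᵒᵖ ⥤ C) {Y : C}
    (x : (colimit (corepDiagram C D)).obj Y) :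
    ∃ (q : Q) (h : D.obj (op q) ⟶ Y), (colimit.ι (corepDiagram C D) q).app Y h = x :=
  Types.jointly_surjective_of_isColimit
    (isColimitOfPreserves ((evaluation C (Type v)).obj Y) (colimit.isColimit _)) x

lemma corepDiagram_ι_app_comp (D : Qᵒᵖ ⥤ C) (q : Q) {X Y : C} (h : D.obj (op q) ⟶ X)
    (k : X ⟶ Y) :
    (colimit.ι (corepDiagram C D) q).app Y (h ≫ k)
      = (colimit (corepDiagram C D)).map k ((colimit.ι (corepDiagram C D) q).app X h) :=
  NatTrans.naturality_apply (colimit.ι (corepDiagram C D) q) k h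

lemma exists_map_ι_id_eq_of_iso {D : Qᵒᵖ ⥤ C} {F : C ⥤ Type v}
    (θ : colimit (corepDiagram C D) ≅ F) {Y : C} (x : F.obj Y) :
    ∃ (q : Q) (k : D.obj (op q) ⟶ Y),
      F.map k (θ.hom.app _ ((colimit.ι (corepDiagram C D) q).app (D.obj (op q)) (𝟙 _))) = x := by
  obtain ⟨q, k, hk⟩ := corepDiagram_jointly_surjective D (θ.inv.app Y x)
  refine ⟨q, k, ?_⟩
  calc F.map k (θ.hom.app _ ((colimit.ι (corepDiagram C D) q).app (D.obj (op q)) (𝟙 _)))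
      = θ.hom.app Y ((colimit (corepDiagram C D)).map k
          ((colimit.ι (corepDiagram C D) q).app (D.obj (op q)) (𝟙 _))) :=
        (NatTrans.naturality_apply θ.hom k _).symm
    _ = θ.hom.app Y ((colimit.ι (corepDiagram C D) q).app Y k) := by
        rw [← corepDiagram_ι_app_comp, Category.id_comp]
    _ = x := by rw [hk]; simp

variable [IsDirectedOrder Q] {D : Qᵒᵖ ⥤ C}

lemma corepDiagram_ι_app_injective (hD : ∀ {i j : Qᵒᵖ} (f : i ⟶ j), Epi (D.map f)) (q : Q)
    (Y : C) :
    Function.Injective ((colimit.ι (corepDiagram C D) q).app Y) := by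
  intro h h' hh
  obtain ⟨q', φ, hφ⟩ := (Types.FilteredColimit.isColimit_eq_iff' (isColimitOfPreserves
    ((evaluation C (Type v)).obj Y) (colimit.isColimit (corepDiagram C D))) h h').1 hh
  exact (cancel_epi (D.map φ.op)).1 hφ

noncomputable def isColimitWhiskerOfEpi (hD : ∀ {i j : Qᵒᵖ} (f : i ⟶ j), Epi (D.map f))
    {P : Type v} [Preorder P] [IsDirectedOrder P] {u : P → Q} (hu : Monotone u)
    (hgen : ∀ (Y : C) (x : (colimit (corepDiagram C D)).obj Y),
      ∃ p h, (colimit.ι (corepDiagram C D) (u p)).app Y h = x) :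
    IsColimit ((colimit.cocone (corepDiagram C D)).whisker hu.functor :
      Cocone (corepDiagram C (hu.functor.op ⋙ D))) :=
  evaluationJointlyReflectsColimits _ fun Y => Types.FilteredColimit.isColimitOf' _ _
    (fun x => by obtain ⟨p, h, rfl⟩ := hgen Y x; exact ⟨p, h, rfl⟩)
    (fun p h h' hh => ⟨p, 𝟙 p, by rw [corepDiagram_ι_app_injective hD (u p) Y hh]⟩)

end Corepresentable

variable {C : Type u} [Category.{v} C]

noncomputable def plimIsoOfColimitIso {Γ₁ Γ₂ : DirPoset.{v}} {D₁ : Γ₁.carrierᵒᵖ ⥤ C}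
    {D₂ : Γ₂.carrierᵒᵖ ⥤ C} (e : colimit (corepDiagram C D₁) ≅ colimit (corepDiagram C D₂)) :
    plimObj D₂ ≅ plimObj D₁ :=
  ((ObjectProperty.fullyFaithfulι _).preimageIso (X := (plimObj D₁).unop)
    (Y := (plimObj D₂).unop) e).op

noncomputable def colimitIsoOfPlimIso {Γ₁ Γ₂ : DirPoset.{v}} {D₁ : Γ₁.carrierᵒᵖ ⥤ C}
    {D₂ : Γ₂.carrierᵒᵖ ⥤ C} (e : plimObj D₁ ≅ plimObj D₂) :
    colimit (corepDiagram C D₂) ≅ colimit (corepDiagram C D₁) :=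
  (ObjectProperty.ι _).mapIso e.unop

theorem exists_countable_epi_diagram_of_iso {Γ Γ' : DirPoset.{v}} [Countable Γ'.carrier]
    {D : Γ.carrierᵒᵖ ⥤ C} (hD : ∀ {i j : Γ.carrierᵒᵖ} (f : i ⟶ j), Epi (D.map f))
    {D' : Γ'.carrierᵒᵖ ⥤ C} (e : plimObj D' ≅ plimObj D) :
    ∃ (Γ₀ : DirPoset.{v}), Countable Γ₀.carrier ∧
      ∃ D₀ : Γ₀.carrierᵒᵖ ⥤ C, (∀ {i j : Γ₀.carrierᵒᵖ} (f : i ⟶ j), Epi (D₀.map f)) ∧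
        Nonempty (plimObj D ≅ plimObj D₀) := by
  have := Γ.directed
  have := Γ'.nonempty
  let θ := (colimitIsoOfPlimIso e).symm
  choose g f hf using fun γ' : Γ'.carrier => corepDiagram_jointly_surjective D
    (θ.hom.app _ ((colimit.ι (corepDiagram C D') γ').app (D'.obj (op γ')) (𝟙 _)))
  obtain ⟨T, hgT, hT, hTdir⟩ := (Set.countable_range g).exists_superset_directedOn
  have := hTdir.isDirectedOrder
  let Γ₀ : DirPoset.{v} :=
    { carrier := T
      nonempty := ((Set.range_nonempty g).mono hgT).to_subtype
      directed := this }
  have hu : Monotone (Subtype.val : Γ₀.carrier → Γ.carrier) := fun _ _ h => h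
  have hgen : ∀ (Y : C) (x : (colimit (corepDiagram C D)).obj Y),
      ∃ (p : Γ₀.carrier) (h : D.obj (op p.1) ⟶ Y),
        (colimit.ι (corepDiagram C D) p.1).app Y h = x := by
    intro Y x
    obtain ⟨γ', k, rfl⟩ := exists_map_ι_id_eq_of_iso θ x
    exact ⟨⟨g γ', hgT ⟨γ', rfl⟩⟩, f γ' ≫ k, by rw [corepDiagram_ι_app_comp, hf]⟩
  exact ⟨Γ₀, hT.to_subtype, hu.functor.op ⋙ D, fun φ => hD _,
    ⟨plimIsoOfColimitIso ((colimit.isColimit _).coconePointUniqueUpToIso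
      (isColimitWhiskerOfEpi hD hu hgen))⟩⟩

theorem statement_4_general (A : Type u) [Category.{v} A]
    (X : Pro A) (hX : InProOmega X) :
    IsStrict X ↔
      ∃ (Γ : DirPoset.{v}), Countable Γ.carrier ∧
        ∃ D : Γ.carrierᵒᵖ ⥤ A,
          (∀ {i j : Γ.carrierᵒᵖ} (f : i ⟶ j), Epi (D.map f)) ∧
          Nonempty (X ≅ plimObj D) := by
  refine ⟨fun ⟨Γ, D, hD, ⟨eD⟩⟩ => ?_, fun ⟨Γ, _, D, hD, eD⟩ => ⟨Γ, D, hD, eD⟩⟩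
  obtain ⟨Γ', _, D', ⟨eD'⟩⟩ := hX
  obtain ⟨Γ₀, hΓ₀, D₀, hD₀, ⟨e₀⟩⟩ := exists_countable_epi_diagram_of_iso hD (eD'.symm ≪≫ eD)
  exact ⟨Γ₀, hΓ₀, D₀, hD₀, ⟨eD ≪≫ e₀⟩⟩

/-- For an abelian category `A`, a pro-object belonging to `Pro_ω A` is
strict if and only if it can be represented by a diagram of epimorphisms in `A` indexed by
the opposite of a *countable* directed poset. -/
theorem statement_4 (A : Type u) [Category.{v} A] [Abelian A]
    (X : Pro A) (hX : InProOmega X) :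
    IsStrict X ↔
      ∃ (Γ : DirPoset.{v}), Countable Γ.carrier ∧
        ∃ D : Γ.carrierᵒᵖ ⥤ A,
          (∀ {i j : Γ.carrierᵒᵖ} (f : i ⟶ j), Epi (D.map f)) ∧
          Nonempty (X ≅ plimObj D) :=
  statement_4_general A X hX

end ProPaper
end

section
/- Let C be a category with finite products. Then for any countable family of objects D_n ∈ Pro_ω(C), indexed by n ∈ ℕ, and any object C of C, every morphism ∏_{n∈ℕ} D_n → C in Pro(C) (the product being taken in Pro(C)) factors through a finite subproduct: there exists m ∈ ℕ such that the morphism equals the composite of the canonical subproduct projection ∏_{n∈ℕ} D_n → ∏_{n=0}^{m} D_n with some morphism ∏_{n=0}^{m} D_n → C. -/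
open CategoryTheory CategoryTheory.Limits Opposite

universe v u u'

namespace ProPaper

variable (C : Type u) [Category.{v} C]

variable {C}

/-!
A morphism from a pro-object `Q` to an object `X` of `C` is an element of `Q(X)`, where `Q` is
viewed as a functor `C ⥤ Type`. Pro-objects are filtered colimits of corepresentable functors,
so they preserve finite products; consequently the product of the pro-objects `plim Dᵢ` is
`plim_μ ∏_{i ∈ S} Dᵢ(μᵢ)`, indexed by finite sets `S` of factors together with a stage `μᵢ` of
each of them. An element of this filtered colimit at `X` comes from a single stage `μ`, that is,
from a morphism `∏_{i ∈ S} Dᵢ(μᵢ) ⟶ X`; hence every morphism from the product to `X` factors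
through the finite subproduct over `S`, and so through `∏_{n ≤ max S} Dₙ`.
-/

attribute [reducible] corepDiagram plimObj

instance preservesFiniteLimits_unop_obj (Q : Pro C) : PreservesFiniteLimits Q.unop.obj := by
  obtain ⟨Γ, D, ⟨e⟩⟩ := Q.unop.property
  -- `Γ` is filtered, so `colim` over it preserves finite limits
  have := Γ.nonempty
  have := Γ.directed
  have : PreservesFiniteLimits (corepDiagram C D).flip :=
    preservesFiniteLimits_of_evaluation _ fun γ =>
      preservesFiniteLimits_of_natIso (Iso.refl (coyoneda.obj (op (D.obj (op γ)))))
  have : PreservesFiniteLimits (colimit (corepDiagram C D)) :=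
    preservesFiniteLimits_of_natIso (colimitIsoFlipCompColim _).symm
  exact preservesFiniteLimits_of_natIso e.symm

theorem bijective_map_pi_π (F : C ⥤ Type v) {J : Type} (Y : J → C) [HasProduct Y]
    [PreservesLimit (Discrete.functor Y) F] :
    Function.Bijective fun (x : F.obj (∏ᶜ Y)) j => F.map (Pi.π Y j) x := by
  rw [Function.bijective_iff_existsUnique]
  intro y
  obtain ⟨x, hx, huniq⟩ := (Types.isLimit_iff (F.mapCone (limit.cone (Discrete.functor Y)))).mp
    ⟨isLimitOfPreserves F (limit.isLimit _)⟩ (fun j => y j.as)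
    (fun {j j'} g => by obtain rfl : j = j' := Discrete.ext (Discrete.eq_of_hom g); simp)
  exact ⟨x, funext fun j => hx ⟨j⟩, fun x' hx' => huniq x' fun ⟨j⟩ => congrFun hx' j⟩

section

variable [HasFiniteProducts C]

noncomputable def piEquiv (Q : Pro C) {J : Type} [Finite J] (Y : J → C) :
    Q.unop.obj.obj (∏ᶜ Y) ≃ ∀ j, Q.unop.obj.obj (Y j) :=
  Equiv.ofBijective _ (bijective_map_pi_π _ Y)

theorem piEquiv_apply (Q : Pro C) {J : Type} [Finite J] (Y : J → C) (x : Q.unop.obj.obj (∏ᶜ Y))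
    (j : J) : piEquiv Q Y x j = Q.unop.obj.map (Pi.π Y j) x :=
  rfl

theorem map_π_piEquiv_symm (Q : Pro C) {J : Type} [Finite J] (Y : J → C)
    (y : ∀ j, Q.unop.obj.obj (Y j)) (j : J) :
    Q.unop.obj.map (Pi.π Y j) ((piEquiv Q Y).symm y) = y j :=
  congrFun ((piEquiv Q Y).apply_symm_apply y) j

end

section PlimHom

variable {Γ : DirPoset.{v}} (E : Γ.carrierᵒᵖ ⥤ C) {Q Q' : Pro C}

noncomputable def plimSec (f : Q ⟶ plimObj E) (γ : Γ.carrierᵒᵖ) : Q.unop.obj.obj (E.obj γ) :=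
  coyonedaEquiv (colimit.ι (corepDiagram C E) γ.unop ≫ f.unop.hom)

theorem plimSec_map (f : Q ⟶ plimObj E) {γ γ' : Γ.carrierᵒᵖ} (h : γ ⟶ γ') :
    Q.unop.obj.map (E.map h) (plimSec E f γ) = plimSec E f γ' := by
  rw [plimSec, coyonedaEquiv_naturality, ← Category.assoc]
  exact congrArg (fun α => coyonedaEquiv (α ≫ f.unop.hom)) (colimit.w (corepDiagram C E) h.unop)

theorem plimHom_ext {f f' : Q ⟶ plimObj E} (h : ∀ γ, plimSec E f γ = plimSec E f' γ) :
    f = f' :=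
  Quiver.Hom.unop_inj <| ObjectProperty.hom_ext _ <|
    colimit.hom_ext fun γ => coyonedaEquiv.injective (h (op γ))

noncomputable def plimHomOfSec (x : ∀ γ : Γ.carrierᵒᵖ, Q.unop.obj.obj (E.obj γ))
    (hx : ∀ {γ γ' : Γ.carrierᵒᵖ} (h : γ ⟶ γ'), Q.unop.obj.map (E.map h) (x γ) = x γ') :
    Q ⟶ plimObj E :=
  Quiver.Hom.op <| ObjectProperty.homMk <| colimit.desc (corepDiagram C E)
    { pt := Q.unop.obj
      ι :=
        { app := fun γ => coyonedaEquiv.symm (x (op γ))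
          naturality := fun γ γ' h => by
            dsimp [corepDiagram]
            rw [Category.comp_id, ← hx h.op, coyonedaEquiv_symm_map] } }

@[simp]
theorem plimSec_plimHomOfSec (x : ∀ γ : Γ.carrierᵒᵖ, Q.unop.obj.obj (E.obj γ))
    (hx : ∀ {γ γ' : Γ.carrierᵒᵖ} (h : γ ⟶ γ'), Q.unop.obj.map (E.map h) (x γ) = x γ')
    (γ : Γ.carrierᵒᵖ) : plimSec E (plimHomOfSec E x hx) γ = x γ := by
  simp [plimSec, plimHomOfSec]

theorem plimSec_comp (p : Q' ⟶ Q) (f : Q ⟶ plimObj E) (γ : Γ.carrierᵒᵖ) :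
    plimSec E (p ≫ f) γ = p.unop.hom.app _ (plimSec E f γ) := by
  rw [plimSec, plimSec, ← coyonedaEquiv_comp]
  rfl

theorem unop_hom_app_ι_app (f : Q ⟶ plimObj E) (γ : Γ.carrier) {A : C} (h : E.obj (op γ) ⟶ A) :
    f.unop.hom.app A ((colimit.ι (corepDiagram C E) γ).app A h) =
      Q.unop.obj.map h (plimSec E f (op γ)) :=
  (map_coyonedaEquiv (colimit.ι (corepDiagram C E) γ ≫ f.unop.hom) h).symm

theorem plimSec_comp_plim_map {E' : Γ.carrierᵒᵖ ⥤ C} (f : Q ⟶ plimObj E) (α : E ⟶ E')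
    (γ : Γ.carrierᵒᵖ) :
    plimSec E' (f ≫ (plim C Γ).map α) γ = Q.unop.obj.map (α.app γ) (plimSec E f γ) := by
  rw [plimSec, plimSec, coyonedaEquiv_naturality]
  congr 1
  exact colimit.ι_map_assoc _ _ _

end PlimHom

section ConstPro

noncomputable def constProHomEquiv (Q : Pro C) (A : C) :
    (Q ⟶ (constPro C).obj A) ≃ Q.unop.obj.obj A where
  toFun f := plimSec ((Functor.const unitPoset.carrierᵒᵖ).obj A) f (op PUnit.unit)
  invFun x := plimHomOfSec ((Functor.const unitPoset.carrierᵒᵖ).obj A) (fun _ => x) fun _ => by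
    simp
  left_inv f := plimHom_ext _ fun ⟨⟨⟩⟩ => plimSec_plimHomOfSec _ _ _ _
  right_inv x := plimSec_plimHomOfSec _ _ _ _

variable {Q Q' : Pro C} {A B : C}

theorem constProHomEquiv_comp (p : Q' ⟶ Q) (f : Q ⟶ (constPro C).obj A) :
    constProHomEquiv Q' A (p ≫ f) = p.unop.hom.app A (constProHomEquiv Q A f) :=
  plimSec_comp ((Functor.const unitPoset.carrierᵒᵖ).obj A) p f (op PUnit.unit)

theorem constProHomEquiv_comp_map (f : Q ⟶ (constPro C).obj A) (w : A ⟶ B) :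
    constProHomEquiv Q B (f ≫ (constPro C).map w) = Q.unop.obj.map w (constProHomEquiv Q A f) :=
  plimSec_comp_plim_map ((Functor.const unitPoset.carrierᵒᵖ).obj A) f
    ((Functor.const unitPoset.carrierᵒᵖ).map w) (op PUnit.unit)

variable [HasFiniteProducts C]

noncomputable def constProPiFanIsLimit {J : Type} [Finite J] (A : J → C) :
    IsLimit (Fan.mk ((constPro C).obj (∏ᶜ A)) fun j => (constPro C).map (Pi.π A j)) := by
  refine Fan.IsLimit.mk _
    (fun s => (constProHomEquiv _ _).symm
      ((piEquiv s.pt A).symm fun j => constProHomEquiv _ _ (s.proj j))) ?_ ?_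
  · intro s j
    apply (constProHomEquiv _ _).injective
    rw [fan_mk_proj, constProHomEquiv_comp_map, Equiv.apply_symm_apply]
    exact congrFun ((piEquiv s.pt A).apply_symm_apply _) j
  · intro s m hm
    rw [Equiv.eq_symm_apply, Equiv.eq_symm_apply]
    funext j
    rw [← hm j, fan_mk_proj, constProHomEquiv_comp_map]
    rfl

@[simp]
theorem constProPiFanIsLimit_lift_map_π {J : Type} [Finite J] {A : J → C}
    (w : ∀ j, Q ⟶ (constPro C).obj (A j)) (j : J) :
    Fan.IsLimit.lift (constProPiFanIsLimit A) w ≫ (constPro C).map (Pi.π A j) = w j :=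
  Fan.IsLimit.fac _ _ _

end ConstPro

section PlimProj

variable {Γ : DirPoset.{v}} (E : Γ.carrierᵒᵖ ⥤ C)

theorem colimit_ι_app_map_homOfLE {γ γ' : Γ.carrier} (l : γ ≤ γ') {A : C} (h : E.obj (op γ) ⟶ A) :
    (colimit.ι (corepDiagram C E) γ').app A (E.map (homOfLE l).op ≫ h) =
      (colimit.ι (corepDiagram C E) γ).app A h :=
  types_congr_hom (NatTrans.congr_app (colimit.w (corepDiagram C E) (homOfLE l)) A) h

theorem colimit_map_ι_app {γ : Γ.carrier} {A B : C} (h : E.obj (op γ) ⟶ A) (w : A ⟶ B) :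
    (colimit (corepDiagram C E)).map w ((colimit.ι (corepDiagram C E) γ).app A h) =
      (colimit.ι (corepDiagram C E) γ).app B (h ≫ w) :=
  (NatTrans.naturality_apply (colimit.ι (corepDiagram C E) γ) w h).symm

noncomputable def plimProj (γ : Γ.carrier) : plimObj E ⟶ (constPro C).obj (E.obj (op γ)) :=
  (constProHomEquiv _ _).symm ((colimit.ι (corepDiagram C E) γ).app _ (𝟙 _))

theorem constProHomEquiv_comp_plimProj {Q : Pro C} (f : Q ⟶ plimObj E) (γ : Γ.carrier) :
    constProHomEquiv Q _ (f ≫ plimProj E γ) = plimSec E f (op γ) := by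
  rw [constProHomEquiv_comp, plimProj, Equiv.apply_symm_apply, unop_hom_app_ι_app]
  exact Q.unop.obj.map_id_apply _ _

theorem exists_eq_plimProj_comp_map {X : C} (f : plimObj E ⟶ (constPro C).obj X) :
    ∃ (γ : Γ.carrier) (h : E.obj (op γ) ⟶ X), f = plimProj E γ ≫ (constPro C).map h := by
  obtain ⟨γ, h, hh⟩ := Types.jointly_surjective _
    (isColimitOfPreserves ((evaluation C (Type v)).obj X) (colimit.isColimit _))
    (constProHomEquiv _ _ f)
  refine ⟨γ, h, (constProHomEquiv _ _).injective ?_⟩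
  rw [constProHomEquiv_comp_map, plimProj, Equiv.apply_symm_apply, ← hh]
  exact ((colimit_map_ι_app E (𝟙 _) h).trans (congrArg _ (Category.id_comp h))).symm

end PlimProj

section Product

variable {ι : Type} (Γ : ι → DirPoset.{v}) (b : ∀ i, (Γ i).carrier)

/-- Index of the product pro-object. Outside `supp` the stage is pinned to `b i`, which makes
the order antisymmetric. -/
@[ext]
structure ProdIndex where
  supp : Finset ι
  idx : ∀ i, (Γ i).carrier
  idx_eq_of_notMem : ∀ i ∉ supp, idx i = b i

namespace ProdIndex

variable {Γ b}

instance : PartialOrder (ProdIndex Γ b) where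
  le μ ν := μ.supp ⊆ ν.supp ∧ ∀ i ∈ μ.supp, μ.idx i ≤ ν.idx i
  le_refl μ := ⟨subset_rfl, fun _ _ => le_rfl⟩
  le_trans μ ν ρ h h' := ⟨h.1.trans h'.1, fun i hi => (h.2 i hi).trans (h'.2 i (h.1 hi))⟩
  le_antisymm μ ν h h' := by
    have hS : μ.supp = ν.supp := h.1.antisymm h'.1
    refine ProdIndex.ext hS (funext fun i => ?_)
    by_cases hi : i ∈ μ.supp
    · exact le_antisymm (h.2 i hi) (h'.2 i (hS ▸ hi))
    · rw [μ.idx_eq_of_notMem i hi, ν.idx_eq_of_notMem i (hS ▸ hi)]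

theorem supp_subset {μ ν : ProdIndex Γ b} (h : μ ≤ ν) : μ.supp ⊆ ν.supp := h.1

theorem idx_le {μ ν : ProdIndex Γ b} (h : μ ≤ ν) {i : ι} (hi : i ∈ μ.supp) :
    μ.idx i ≤ ν.idx i :=
  h.2 i hi

instance : IsDirected (ProdIndex Γ b) (· ≤ ·) where
  directed μ ν := by
    classical
    choose z hμ hν using fun i =>
      haveI := (Γ i).directed
      directed_of (· ≤ ·) (μ.idx i) (ν.idx i)
    refine ⟨⟨μ.supp ∪ ν.supp, fun i => if i ∈ μ.supp ∪ ν.supp then z i else b i,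
      fun i hi => if_neg hi⟩, ⟨Finset.subset_union_left, fun i hi => ?_⟩,
      ⟨Finset.subset_union_right, fun i hi => ?_⟩⟩
    · simp [hi, hμ i]
    · simp [hi, hν i]

variable (Γ b) in
@[reducible]
def dirPoset : DirPoset.{v} where
  carrier := ProdIndex Γ b
  nonempty := ⟨⟨∅, b, fun _ _ => rfl⟩⟩
  directed := inferInstance

variable [DecidableEq ι]

def single (i : ι) (γ : (Γ i).carrier) : ProdIndex Γ b :=
  ⟨{i}, Function.update b i γ, fun _ hj => Function.update_of_ne (by simpa using hj) _ _⟩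

theorem mem_supp_single (i : ι) (γ : (Γ i).carrier) : i ∈ (single (b := b) i γ).supp :=
  Finset.mem_singleton_self i

theorem idx_single_self (i : ι) (γ : (Γ i).carrier) : (single (b := b) i γ).idx i = γ :=
  Function.update_self _ _ _

theorem single_le {i : ι} {γ : (Γ i).carrier} {μ : ProdIndex Γ b} (hi : i ∈ μ.supp)
    (hγ : γ ≤ μ.idx i) : single i γ ≤ μ := by
  refine ⟨Finset.singleton_subset_iff.mpr hi, fun j hj => ?_⟩
  obtain rfl : j = i := Finset.mem_singleton.mp hj
  rwa [idx_single_self]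

end ProdIndex

variable [HasFiniteProducts C] (D : ∀ i, (Γ i).carrierᵒᵖ ⥤ C)

open ProdIndex

@[reducible]
noncomputable def prodDiagram : (dirPoset Γ b).carrierᵒᵖ ⥤ C where
  obj μ := ∏ᶜ fun i : μ.unop.supp => (D i).obj (op (μ.unop.idx i))
  map {μ ν} h := Pi.lift fun i =>
    Pi.π _ ⟨i, supp_subset h.unop.le i.2⟩ ≫ (D i).map (homOfLE (idx_le h.unop.le i.2)).op
  map_id μ := Pi.hom_ext _ _ fun i => by simp [homOfLE_refl]
  map_comp h h' := Pi.hom_ext _ _ fun i => by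
    simp only [Category.assoc, Pi.lift_π, Pi.lift_π_assoc, ← Functor.map_comp]
    rfl

noncomputable abbrev prodPlim : Pro C :=
  plimObj (prodDiagram Γ b D)

variable {Γ b}

noncomputable def stageπ (μ : ProdIndex Γ b) {i : ι} (hi : i ∈ μ.supp) {γ : (Γ i).carrier}
    (hγ : γ ≤ μ.idx i) : (prodDiagram Γ b D).obj (op μ) ⟶ (D i).obj (op γ) :=
  Pi.π _ ⟨i, hi⟩ ≫ (D i).map (homOfLE hγ).op

theorem prodDiagram_map_stageπ {μ ν : ProdIndex Γ b} (h : μ ≤ ν) {i : ι} (hi : i ∈ μ.supp)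
    {γ : (Γ i).carrier} (hγ : γ ≤ μ.idx i) :
    (prodDiagram Γ b D).map (homOfLE h).op ≫ stageπ D μ hi hγ =
      stageπ D ν (supp_subset h hi) (hγ.trans (idx_le h hi)) := by
  simp only [prodDiagram, stageπ, Pi.lift_π_assoc, Category.assoc, ← Functor.map_comp]
  rfl

theorem stageπ_map {μ : ProdIndex Γ b} {i : ι} (hi : i ∈ μ.supp) {γ δ : (Γ i).carrier}
    (hγ : γ ≤ μ.idx i) (hδ : δ ≤ γ) :
    stageπ D μ hi hγ ≫ (D i).map (homOfLE hδ).op = stageπ D μ hi (hδ.trans hγ) := by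
  rw [stageπ, Category.assoc, ← Functor.map_comp]
  rfl

end Product

section ProductLimit

variable {ι : Type} {Γ : ι → DirPoset.{v}} {b : ∀ i, (Γ i).carrier}
  [HasFiniteProducts C] (D : ∀ i, (Γ i).carrierᵒᵖ ⥤ C)

open ProdIndex

noncomputable def prodLiftSec (s : Fan fun i => plimObj (D i)) (μ : (dirPoset Γ b).carrierᵒᵖ) :
    s.pt.unop.obj.obj ((prodDiagram Γ b D).obj μ) :=
  (piEquiv s.pt fun k : μ.unop.supp => (D k).obj (op (μ.unop.idx k))).symm
    fun k => plimSec (D k) (s.proj k) (op (μ.unop.idx k))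

theorem map_prodLiftSec (s : Fan fun i => plimObj (D i)) {μ ν : (dirPoset Γ b).carrierᵒᵖ}
    (h : μ ⟶ ν) :
    s.pt.unop.obj.map ((prodDiagram Γ b D).map h) (prodLiftSec D s μ) = prodLiftSec D s ν := by
  refine (piEquiv s.pt _).injective (funext fun i => ?_)
  rw [prodLiftSec, prodLiftSec, Equiv.apply_symm_apply, piEquiv_apply, ← Functor.map_comp_apply,
    Pi.lift_π, Functor.map_comp_apply, map_π_piEquiv_symm, plimSec_map]

noncomputable def prodPlimLift (s : Fan fun i => plimObj (D i)) : s.pt ⟶ prodPlim Γ b D :=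
  plimHomOfSec (prodDiagram Γ b D) (prodLiftSec D s) (map_prodLiftSec D s)

variable [DecidableEq ι]

noncomputable def singleSec (i : ι) (γ : (Γ i).carrierᵒᵖ) :
    (prodPlim Γ b D).unop.obj.obj ((D i).obj γ) :=
  (colimit.ι (corepDiagram C (prodDiagram Γ b D)) (single i γ.unop)).app _
    (stageπ D _ (mem_supp_single i γ.unop) (idx_single_self i γ.unop).ge)

theorem map_singleSec (i : ι) {γ γ' : (Γ i).carrierᵒᵖ} (h : γ ⟶ γ') :
    (prodPlim Γ b D).unop.obj.map ((D i).map h) (singleSec D i γ) = singleSec D i γ' := by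
  have hle : single (b := b) i γ'.unop ≤ single i γ.unop :=
    single_le (mem_supp_single i _) ((leOfHom h.unop).trans (idx_single_self i _).ge)
  refine (colimit_map_ι_app (prodDiagram Γ b D) _ _).trans ?_
  rw [singleSec, ← colimit_ι_app_map_homOfLE (prodDiagram Γ b D) hle, prodDiagram_map_stageπ]
  exact congrArg _ (stageπ_map D _ _ (leOfHom h.unop))

noncomputable def prodPlimπ (i : ι) : prodPlim Γ b D ⟶ plimObj (D i) :=
  plimHomOfSec (D i) (singleSec D i) (map_singleSec D i)

theorem plimSec_comp_prodPlimπ {Q : Pro C} (p : Q ⟶ prodPlim Γ b D) (μ : ProdIndex Γ b) {i : ι}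
    (hi : i ∈ μ.supp) :
    plimSec (D i) (p ≫ prodPlimπ D i) (op (μ.idx i)) =
      Q.unop.obj.map (Pi.π (fun k : μ.supp => (D k).obj (op (μ.idx k))) ⟨i, hi⟩)
        (plimSec (prodDiagram Γ b D) p (op μ)) := by
  rw [plimSec_comp, prodPlimπ, plimSec_plimHomOfSec, singleSec, unop_hom_app_ι_app,
    ← plimSec_map (prodDiagram Γ b D) p (homOfLE (single_le hi le_rfl)).op,
    ← Functor.map_comp_apply, prodDiagram_map_stageπ]
  simp [stageπ, homOfLE_refl]

theorem prodPlim_hom_ext {Q : Pro C} {p p' : Q ⟶ prodPlim Γ b D}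
    (h : ∀ i, p ≫ prodPlimπ D i = p' ≫ prodPlimπ D i) : p = p' := by
  refine plimHom_ext _ fun ⟨μ⟩ => (piEquiv Q _).injective (funext fun ⟨i, hi⟩ => ?_)
  rw [piEquiv_apply, piEquiv_apply, ← plimSec_comp_prodPlimπ, ← plimSec_comp_prodPlimπ, h]

theorem prodPlimLift_π (s : Fan fun i => plimObj (D i)) (i : ι) :
    prodPlimLift D s ≫ prodPlimπ (b := b) D i = s.proj i := by
  refine plimHom_ext _ fun ⟨γ⟩ => ?_
  rw [plimSec_comp, prodPlimπ, plimSec_plimHomOfSec, singleSec, unop_hom_app_ι_app, prodPlimLift,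
    plimSec_plimHomOfSec, prodLiftSec, stageπ, Functor.map_comp_apply, map_π_piEquiv_symm,
    plimSec_map]

noncomputable def prodPlimFan : Fan fun i => plimObj (D i) :=
  Fan.mk (prodPlim Γ b D) (prodPlimπ D)

noncomputable def prodPlimFanIsLimit : IsLimit (prodPlimFan (b := b) D) :=
  Fan.IsLimit.mk _ (prodPlimLift D) (prodPlimLift_π D)
    fun s _ hm => prodPlim_hom_ext D fun i => (hm i).trans (prodPlimLift_π D s i).symm

theorem plimProj_comp_map_π (μ : ProdIndex Γ b) {i : ι} (hi : i ∈ μ.supp) :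
    plimProj (prodDiagram Γ b D) μ ≫
        (constPro C).map (Pi.π (fun k : μ.supp => (D k).obj (op (μ.idx k))) ⟨i, hi⟩) =
      prodPlimπ D i ≫ plimProj (D i) (μ.idx i) := by
  apply (constProHomEquiv _ _).injective
  have hμ := constProHomEquiv_comp_plimProj (prodDiagram Γ b D) (𝟙 _) μ
  rw [Category.id_comp] at hμ
  rw [constProHomEquiv_comp_map, hμ, constProHomEquiv_comp_plimProj, ← plimSec_comp_prodPlimπ,
    Category.id_comp]

end ProductLimit

theorem exists_iso_plimObj (Q : Pro C) :
    ∃ (Γ : DirPoset.{v}) (E : Γ.carrierᵒᵖ ⥤ C), Nonempty (Q ≅ plimObj E) := by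
  obtain ⟨Γ, E, ⟨e⟩⟩ := Q.unop.property
  exact ⟨Γ, E, ⟨(ObjectProperty.isoMk _ e.symm).op⟩⟩

variable [HasFiniteProducts C]

instance hasProduct {ι : Type} (D : ι → Pro C) : HasProduct D := by
  classical
  choose Γ E e using fun i => exists_iso_plimObj (D i)
  let b i := (Γ i).nonempty.some
  exact ⟨⟨⟨_, (IsLimit.postcomposeHomEquiv (Discrete.natIso fun i => (e i.as).some.symm) _).symm
    (prodPlimFanIsLimit (b := b) E)⟩⟩⟩

theorem exists_finset_factorization {ι : Type} {D : ι → Pro C} {c : Fan D} (hc : IsLimit c)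
    {X : C} (f : c.pt ⟶ (constPro C).obj X) :
    ∃ (S : Finset ι) (A : S → C) (u : ∀ i : S, D i ⟶ (constPro C).obj (A i)) (h : ∏ᶜ A ⟶ X),
      f = Fan.IsLimit.lift (constProPiFanIsLimit A) (fun i => c.proj i ≫ u i) ≫
        (constPro C).map h := by
  classical
  choose Γ E e using fun i => exists_iso_plimObj (D i)
  let b i := (Γ i).nonempty.some
  -- `Φ` and `Ψ` compare `c` with the explicit product of the representing diagrams
  let Φ : c.pt ⟶ prodPlim Γ b E :=
    Fan.IsLimit.lift (prodPlimFanIsLimit E) fun i => c.proj i ≫ (e i).some.hom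
  let Ψ : prodPlim Γ b E ⟶ c.pt := Fan.IsLimit.lift hc fun i => prodPlimπ E i ≫ (e i).some.inv
  have hΦ (i : ι) : Φ ≫ prodPlimπ E i = c.proj i ≫ (e i).some.hom :=
    Fan.IsLimit.fac (prodPlimFanIsLimit E) _ i
  have hΦΨ : Φ ≫ Ψ = 𝟙 _ := Fan.IsLimit.hom_ext hc _ _ fun i => by
    simp [Ψ, reassoc_of% hΦ]
  obtain ⟨μ, h, hf⟩ := exists_eq_plimProj_comp_map _ (Ψ ≫ f)
  refine ⟨μ.supp, fun i => (E i).obj (op (μ.idx i)),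
    fun i => (e i).some.hom ≫ plimProj (E i) (μ.idx i), h, ?_⟩
  calc f = Φ ≫ Ψ ≫ f := by rw [reassoc_of% hΦΨ]
    _ = _ := by
      rw [hf, ← Category.assoc]
      congr 1
      refine Fan.IsLimit.hom_ext (constProPiFanIsLimit _) _ _ fun ⟨i, hi⟩ => ?_
      rw [fan_mk_proj, Category.assoc, plimProj_comp_map_π, reassoc_of% hΦ,
        constProPiFanIsLimit_lift_map_π]

theorem statement_12_general (C : Type u) [Category.{v} C] [HasFiniteProducts C]
    (D : ℕ → Pro C) (X : C)
    (c : Fan D) (hc : IsLimit c) (f : c.pt ⟶ (constPro C).obj X) :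
    ∃ (m : ℕ) (c' : Fan fun k : Fin (m + 1) => D k) (hc' : IsLimit c')
      (g : c'.pt ⟶ (constPro C).obj X),
      f = hc'.lift (Fan.mk c.pt fun k : Fin (m + 1) => c.proj k) ≫ g := by
  obtain ⟨S, A, u, h, hf⟩ := exists_finset_factorization hc f
  let m := S.sup id
  have hS (i : S) : (i : ℕ) < m + 1 := Nat.lt_succ_of_le (Finset.le_sup (f := id) i.2)
  let D' (k : Fin (m + 1)) := D k
  refine ⟨m, _, productIsProduct D',
    Fan.IsLimit.lift (constProPiFanIsLimit A) (fun i => Pi.π D' ⟨i, hS i⟩ ≫ u i) ≫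
      (constPro C).map h, ?_⟩
  rw [hf, ← Category.assoc]
  congr 1
  refine Fan.IsLimit.hom_ext (constProPiFanIsLimit A) _ _ fun i => ?_
  simpa using (Fan.IsLimit.lift_proj_assoc (Fan.mk c.pt fun k : Fin (m + 1) => c.proj k)
    (productIsProduct D') ⟨i, hS i⟩ (u i)).symm

/-- Let `C` be a category with finite products. For any countable family
`D : ℕ → Pro_ω C ⊆ Pro C`, any object `X` of `C`, any product `∏ₙ Dₙ` in `Pro C` (given by
a limit fan `c`) and any morphism `f : ∏ₙ Dₙ ⟶ X` in `Pro C`, the morphism `f` factors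
through a finite subproduct: there are `m : ℕ`, a product `∏_{n ≤ m} Dₙ` (a limit fan `c'`)
and a morphism `g` such that `f` is the composite of the canonical subproduct projection
with `g`. -/
theorem statement_12 (C : Type u) [Category.{v} C] [HasFiniteProducts C]
    (D : ℕ → Pro C) (hD : ∀ n, InProOmega (D n)) (X : C)
    (c : Fan D) (hc : IsLimit c) (f : c.pt ⟶ (constPro C).obj X) :
    ∃ (m : ℕ) (c' : Fan fun k : Fin (m + 1) => D k) (hc' : IsLimit c')
      (g : c'.pt ⟶ (constPro C).obj X),
      f = hc'.lift (Fan.mk c.pt fun k : Fin (m + 1) => c.proj k) ≫ g :=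
  statement_12_general C D X c hc f

end ProPaper
end

section
/- Let B be an additive category with countable products and cokernels, and let B• be a bounded above cochain complex in B. For n ∈ ℤ let τ_{≥n}B• denote the canonical truncation: the complex with coker(B^{n−1} → B^n) in degree n, B^i in degrees i > n, and 0 in degrees below n. Consider the morphism of complexes B• → ∏_{n∈ℕ} τ_{≥−n}B• whose components are the natural projections B• → τ_{≥−n}B•, and the endomorphism (id − shift) of ∏_{n∈ℕ} τ_{≥−n}B•, where shift has components the natural transition maps τ_{≥−(n+1)}B• → τ_{≥−n}B•. Then the short sequence of complexes 0 → B• → ∏_{n∈ℕ} τ_{≥−n}B• → (id − shift) → ∏_{n∈ℕ} τ_{≥−n}B• → 0 is degreewise split exact; consequently, in the homotopy category Hot(B), the complex B• is a homotopy limit of the bounded complexes τ_{≥−n}B•. -/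
open CategoryTheory CategoryTheory.Limits CategoryTheory.Pretriangulated

universe v u v' u'

/-!
In degree `i` the tower `(T n).X i` is zero for `n < -i` and, through `p`, constant equal to
`Bc.X i` for `n > -i`. For such an eventually constant tower the sequence
`0 → lim → ∏ → ∏ → 0` (with `id - shift`) splits: the retraction projects onto a stable term
and inverts `p`, and the section solves `y n - t (y (n + 1)) = z n` by partial sums of `z`
transported along the isomorphisms. Products of complexes are computed degreewise, and a
degreewise split short exact sequence of complexes yields a distinguished triangle in the
homotopy category.
-/

namespace ProPaper

section TowerInverse

variable {C : Type u} [Category.{v} C] [Preadditive C] {X : C} {Y : ℕ → C} {q : ∀ n, X ⟶ Y n}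
  {t : ∀ n, Y (n + 1) ⟶ Y n} (ht : ∀ n, q (n + 1) ≫ t n = q n) {N : ℕ}
  (hiso : ∀ n, N ≤ n → IsIso (q n))

noncomputable def towerInv (n : ℕ) : Y n ⟶ X :=
  if h : N ≤ n then have := hiso n h; inv (q n) else 0

lemma hom_towerInv {n : ℕ} (h : N ≤ n) : q n ≫ towerInv hiso n = 𝟙 X := by
  have := hiso n h
  simp [towerInv, h]

lemma towerInv_hom {n : ℕ} (h : N ≤ n) : towerInv hiso n ≫ q n = 𝟙 (Y n) := by
  have := hiso n h
  simp [towerInv, h]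

include ht in
lemma towerInv_comp_hom_eq_transition {n : ℕ} (h : N ≤ n + 1) :
    towerInv hiso (n + 1) ≫ q n = t n := by
  rw [← ht, ← Category.assoc, towerInv_hom hiso h, Category.id_comp]

include ht in
lemma transition_comp_towerInv {n : ℕ} (h : N ≤ n) :
    t n ≫ towerInv hiso n = towerInv hiso (n + 1) := by
  rw [← towerInv_comp_hom_eq_transition ht hiso (by omega), Category.assoc, hom_towerInv hiso h,
    Category.comp_id]

end TowerInverse

section Tower

variable {C : Type u} [Category.{v} C] {X : C} {Y : ℕ → C} (q : ∀ n, X ⟶ Y n)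
  (t : ∀ n, Y (n + 1) ⟶ Y n) [HasProduct Y]

noncomputable def towerShift : ∏ᶜ Y ⟶ ∏ᶜ Y :=
  Pi.lift fun n => Pi.π Y (n + 1) ≫ t n

@[simp]
lemma towerShift_π (n : ℕ) : towerShift t ≫ Pi.π Y n = Pi.π Y (n + 1) ≫ t n := by
  simp [towerShift]

variable [Preadditive C] {q t}

lemma lift_comp_sub_towerShift (ht : ∀ n, q (n + 1) ≫ t n = q n) :
    Pi.lift q ≫ (𝟙 (∏ᶜ Y) - towerShift t) = 0 := by
  ext n
  simp [Preadditive.sub_comp, ht]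

lemma piComparison_comp_sub_towerShift {D : Type u'} [Category.{v'} D] [Preadditive D]
    (G : C ⥤ D) [G.Additive] [HasProduct fun n => G.obj (Y n)] :
    piComparison G Y ≫ (𝟙 _ - towerShift fun n => G.map (t n)) =
      G.map (𝟙 _ - towerShift t) ≫ piComparison G Y := by
  ext n
  simp only [Preadditive.sub_comp, Preadditive.comp_sub, Category.assoc, Category.id_comp,
    Category.comp_id, G.map_sub, G.map_id, towerShift_π, piComparison_comp_π,
    piComparison_comp_π_assoc, ← G.map_comp]

noncomputable abbrev towerShortComplex (ht : ∀ n, q (n + 1) ≫ t n = q n) : ShortComplex C :=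
  ShortComplex.mk (Pi.lift q) (𝟙 (∏ᶜ Y) - towerShift t) (lift_comp_sub_towerShift ht)

section Splitting

variable (ht : ∀ n, q (n + 1) ≫ t n = q n) {N : ℕ} (hiso : ∀ n, N ≤ n → IsIso (q n))

noncomputable def towerPartialSum (n : ℕ) : ∏ᶜ Y ⟶ X :=
  ∑ k ∈ Finset.Ico N n, Pi.π Y k ≫ towerInv hiso k

lemma towerPartialSum_succ {n : ℕ} (h : N ≤ n) :
    towerPartialSum hiso (n + 1) = towerPartialSum hiso n + Pi.π Y n ≫ towerInv hiso n :=
  Finset.sum_Ico_succ_top h _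

include ht in
lemma sub_towerShift_comp_towerPartialSum {n : ℕ} (h : N ≤ n) :
    (𝟙 (∏ᶜ Y) - towerShift t) ≫ towerPartialSum hiso n =
      Pi.π Y N ≫ towerInv hiso N - Pi.π Y n ≫ towerInv hiso n := by
  have hstep : ∀ k ∈ Finset.Ico N n, (𝟙 (∏ᶜ Y) - towerShift t) ≫ Pi.π Y k ≫ towerInv hiso k =
      -(Pi.π Y (k + 1) ≫ towerInv hiso (k + 1) - Pi.π Y k ≫ towerInv hiso k) := by
    intro k hk
    rw [Preadditive.sub_comp, ← Category.assoc (towerShift t), towerShift_π, Category.assoc,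
      transition_comp_towerInv ht hiso (Finset.mem_Ico.1 hk).1]
    simp
  rw [towerPartialSum, Preadditive.comp_sum, Finset.sum_congr rfl hstep, Finset.sum_neg_distrib,
    Finset.sum_Ico_sub (fun k => Pi.π Y k ≫ towerInv hiso k) h, neg_sub]

-- `y N = 0` and `y n = -∑_{N ≤ k < n} z k` for `n ≥ N`; below `N` only `Y (N - 1)` can be
-- nonzero, and there `y (N - 1) = z (N - 1)`.
noncomputable def towerSection : ∏ᶜ Y ⟶ ∏ᶜ Y :=
  Pi.lift fun n => if N ≤ n then -towerPartialSum hiso n ≫ q n else Pi.π Y n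

lemma towerSection_π_of_le {n : ℕ} (h : N ≤ n) :
    towerSection hiso ≫ Pi.π Y n = -towerPartialSum hiso n ≫ q n := by
  simp [towerSection, h]

lemma towerSection_π_of_lt {n : ℕ} (h : n < N) : towerSection hiso ≫ Pi.π Y n = Pi.π Y n := by
  simp [towerSection, Nat.not_le.2 h]

lemma towerSection_π_eq_zero : towerSection hiso ≫ Pi.π Y N = 0 := by
  simp [towerSection_π_of_le hiso le_rfl, towerPartialSum]

include ht in
lemma towerSection_comp_sub_towerShift (hzero : ∀ n, n + 1 < N → IsZero (Y n)) :
    towerSection hiso ≫ (𝟙 (∏ᶜ Y) - towerShift t) = 𝟙 (∏ᶜ Y) := by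
  ext n
  rw [Category.assoc, Preadditive.sub_comp, towerShift_π, Category.id_comp, Preadditive.comp_sub,
    ← Category.assoc]
  rcases lt_trichotomy (n + 1) N with h | rfl | h
  · exact (hzero n h).eq_of_tgt _ _
  · rw [towerSection_π_eq_zero, zero_comp, sub_zero, towerSection_π_of_lt hiso (Nat.lt_succ_self n)]
  · have hn : N ≤ n := by omega
    rw [towerSection_π_of_le hiso hn, towerSection_π_of_le hiso h.le, Preadditive.neg_comp,
      Category.assoc, ht, towerPartialSum_succ hiso hn, Preadditive.add_comp, Category.assoc,
      towerInv_hom hiso hn, Category.comp_id]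
    abel

include ht in
lemma towerInv_comp_lift_add_sub_towerShift_comp_towerSection
    (hzero : ∀ n, n + 1 < N → IsZero (Y n)) :
    (Pi.π Y N ≫ towerInv hiso N) ≫ Pi.lift q + (𝟙 (∏ᶜ Y) - towerShift t) ≫ towerSection hiso =
      𝟙 (∏ᶜ Y) := by
  ext n
  simp only [Preadditive.add_comp, Category.assoc, Pi.lift_π, Category.id_comp]
  rcases lt_trichotomy (n + 1) N with h | rfl | h
  · exact (hzero n h).eq_of_tgt _ _
  · rw [towerSection_π_of_lt hiso (Nat.lt_succ_self n),
      towerInv_comp_hom_eq_transition ht hiso le_rfl]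
    simp [Preadditive.sub_comp]
  · have hn : N ≤ n := by omega
    rw [towerSection_π_of_le hiso hn, Preadditive.comp_neg, ← Category.assoc (_ - _),
      sub_towerShift_comp_towerPartialSum ht hiso hn, Preadditive.sub_comp, Category.assoc,
      Category.assoc, towerInv_hom hiso hn, Category.comp_id]
    abel

noncomputable def towerShortComplexSplitting (hzero : ∀ n, n + 1 < N → IsZero (Y n)) :
    (towerShortComplex ht).Splitting where
  r := Pi.π Y N ≫ towerInv hiso N
  s := towerSection hiso
  f_r := by simp [hom_towerInv hiso le_rfl]
  s_g := towerSection_comp_sub_towerShift ht hiso hzero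
  id := towerInv_comp_lift_add_sub_towerShift_comp_towerSection ht hiso hzero

end Splitting

end Tower

noncomputable def towerShortComplexMapIso {C : Type u} {D : Type u'} [Category.{v} C]
    [Category.{v'} D] [Preadditive C] [Preadditive D] (G : C ⥤ D) [G.Additive] {X : C}
    {Y : ℕ → C} [HasProduct Y]
    [HasProduct fun n => G.obj (Y n)] [PreservesLimit (Discrete.functor Y) G]
    {q : ∀ n, X ⟶ Y n} {t : ∀ n, Y (n + 1) ⟶ Y n} (ht : ∀ n, q (n + 1) ≫ t n = q n) :
    (towerShortComplex ht).map G ≅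
      towerShortComplex (q := fun n => G.map (q n)) (t := fun n => G.map (t n))
        (fun n => by rw [← G.map_comp, ht]) :=
  ShortComplex.isoMk (Iso.refl _) (PreservesProduct.iso G Y) (PreservesProduct.iso G Y)
    ((Category.id_comp _).trans (map_lift_piComparison G Y X q).symm)
    (piComparison_comp_sub_towerShift G)

noncomputable def towerShortComplexDegreewiseSplitting {B : Type u} [Category.{v} B] [Preadditive B]
    [HasCountableProducts B] {K : CochainComplex B ℤ} {T : ℕ → CochainComplex B ℤ}
    {p : ∀ n, K ⟶ T n} {t : ∀ n, T (n + 1) ⟶ T n} (ht : ∀ n, p (n + 1) ≫ t n = p n)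
    (hT0 : ∀ (n : ℕ) (i : ℤ), i < -(n : ℤ) → IsZero ((T n).X i))
    (hTiso : ∀ (n : ℕ) (i : ℤ), -(n : ℤ) < i → IsIso ((p n).f i)) (i : ℤ) :
    ((towerShortComplex ht).map (HomologicalComplex.eval B _ i)).Splitting :=
  (towerShortComplexSplitting _ (N := (1 - i).toNat) (fun n hn => hTiso n i (by omega))
    (fun n hn => hT0 n i (by omega))).ofIso
      (towerShortComplexMapIso (HomologicalComplex.eval B _ i) ht).symm

/-- Let `B` be an additive category with countable products and
cokernels, and let `Bc` be a bounded above cochain complex in `B`.  Suppose given, for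
every `n : ℕ`, the canonical truncation `T n = τ_{≥ -n} Bc` together with the natural
projection `p n : Bc ⟶ T n` — characterized by: `(T n).X i` vanishes in degrees
`i < -n`, `(p n).f i` is an isomorphism in degrees `i > -n`, and in degree `-n` the map
`(p n).f (-n)` is a cokernel of the differential `Bc.d (-n-1) (-n)` — together with the
natural transition maps `t n : T (n+1) ⟶ T n` (i.e. satisfying `p (n+1) ≫ t n = p n`).
Then the short sequence of complexes
`0 ⟶ Bc ⟶ ∏ₙ T n ⟶ (id - shift) ⟶ ∏ₙ T n ⟶ 0` is degreewise split exact;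
consequently, in the homotopy category, `Bc` is a homotopy limit of the bounded complexes
`T n`: the triangle `Bc ⟶ ∏ₙ T n ⟶ ∏ₙ T n ⟶ Bc⟦1⟧` is distinguished. -/
theorem statement_18 (B : Type u) [Category.{v} B] [Preadditive B] [HasZeroObject B]
    [HasBinaryBiproducts B] [HasCountableProducts B]
    (Bc : CochainComplex B ℤ)
    (T : ℕ → CochainComplex B ℤ) (p : ∀ n, Bc ⟶ T n)
    (hT0 : ∀ (n : ℕ) (i : ℤ), i < -(n : ℤ) → IsZero ((T n).X i))
    (hTiso : ∀ (n : ℕ) (i : ℤ), -(n : ℤ) < i → IsIso ((p n).f i))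
    (t : ∀ n : ℕ, T (n + 1) ⟶ T n) (ht : ∀ n : ℕ, p (n + 1) ≫ t n = p n) :
    ∃ h0 : Pi.lift p ≫ (𝟙 (∏ᶜ T) - Pi.lift fun n => Pi.π T (n + 1) ≫ t n) = 0,
      (∀ i : ℤ,
        Nonempty ((ShortComplex.mk ((Pi.lift p).f i)
          ((𝟙 (∏ᶜ T) - Pi.lift fun n => Pi.π T (n + 1) ≫ t n).f i)
          (by simpa using congrArg (fun φ => HomologicalComplex.Hom.f φ i) h0)).Splitting)) ∧
      ∃ γ : (HomotopyCategory.quotient B (ComplexShape.up ℤ)).obj (∏ᶜ T) ⟶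
          ((HomotopyCategory.quotient B (ComplexShape.up ℤ)).obj Bc)⟦(1 : ℤ)⟧,
        Triangle.mk ((HomotopyCategory.quotient B (ComplexShape.up ℤ)).map (Pi.lift p))
          ((HomotopyCategory.quotient B (ComplexShape.up ℤ)).map
            (𝟙 (∏ᶜ T) - Pi.lift fun n => Pi.π T (n + 1) ≫ t n)) γ
          ∈ distTriang (HomotopyCategory B (ComplexShape.up ℤ)) := by
  let σ := towerShortComplexDegreewiseSplitting ht hT0 hTiso
  exact ⟨lift_comp_sub_towerShift ht, fun i => ⟨σ i⟩, _,
    (HomotopyCategory.distinguished_iff_iso_trianglehOfDegreewiseSplit _).2 ⟨_, σ, ⟨Iso.refl _⟩⟩⟩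

end ProPaper
end
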